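/- Let Z₁, Z₂, … be independent standard normal random variables. Then the rescaled median absolute deviation MAD₁≤i≤n Zᵢ / Φ⁻¹(3/4), where Φ⁻¹ is the quantile function of the standard normal distribution, converges in probability to 1 as n → ∞; that is, the rescaled MAD is a weakly consistent estimator of the scale σ = 1 under the standard normal distribution. -/

import Mathlib

open MeasureTheory ProbabilityTheory Filter

/-- The sample median of a finite sample `x : Fin n → ℝ`, defined from the order
statistics: the middle order statistic when `n` is odd, and the average of the
two middle order statistics when `n` is even. -/
noncomputable def sampleMedian {n : ℕ} (x : Fin n → ℝ) : ℝ :=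
  let l := (List.ofFn x).mergeSort (· ≤ ·)
  if n % 2 = 1 then l.getD (n / 2) 0
  else (l.getD (n / 2 - 1) 0 + l.getD (n / 2) 0) / 2

/-- The median absolute deviation: `MAD(x) = medianᵢ |xᵢ − median(x)|`. -/
noncomputable def sampleMAD {n : ℕ} (x : Fin n → ℝ) : ℝ :=
  sampleMedian (fun i => |x i - sampleMedian x|)

/-- The quantile function `Φ⁻¹` of the standard normal distribution:
`Φ⁻¹(p) = inf {x | p ≤ Φ(x)}` where `Φ` is the CDF of `N(0,1)`. -/
noncomputable def stdGaussianQuantile (p : ℝ) : ℝ :=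
  sInf {x : ℝ | p ≤ ProbabilityTheory.cdf (gaussianReal 0 1) x}

/-!
By the strong law of large numbers applied to indicators, if `P(Zᵢ ∈ S) > 1/2` then almost surely
more than half of `Z₁, …, Zₙ` lie in `S` for all large `n`; and once more than half of a sample lies
in `(-∞, t]` (resp. `[t, ∞)`), its median is `≤ t` (resp. `≥ t`). As `0` is the unique median of
`N(0,1)` and `Φ⁻¹(3/4)` the unique median of `|Z|`, the sample median tends to `0` almost surely,
and since `|Zᵢ - median|` and `|Zᵢ|` differ by at most `|median|`, the MAD tends to `Φ⁻¹(3/4)`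
almost surely, hence in probability.
-/

open Finset Set Topology
open scoped NNReal

theorem List.countP_ofFn {α : Type*} {n : ℕ} (f : Fin n → α) (p : α → Prop) [DecidablePred p] :
    (List.ofFn f).countP (fun a => p a) = #{i | p (f i)} := by
  rw [List.ofFn_eq_map, List.countP_map, Finset.card_def, Finset.filter_val,
    ← Multiset.countP_eq_card_filter, Fin.univ_def]
  simp [Multiset.coe_countP, Function.comp_def]

theorem List.Pairwise.lt_countP_iff {α : Type*} [Preorder α] {l : List α}
    (hl : l.Pairwise (· ≤ ·)) {p : α → Prop} [DecidablePred p]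
    (hp : ∀ ⦃a b⦄, a ≤ b → p b → p a) {i : ℕ} (hi : i < l.length) :
    i < l.countP (fun a => p a) ↔ p l[i] := by
  constructor
  · intro hcount
    by_contra hpi
    have hdrop : (l.drop i).countP (fun a => p a) = 0 := by
      have hsorted := hl.sublist (l.drop_sublist i)
      rw [List.drop_eq_getElem_cons hi, List.pairwise_cons] at hsorted
      rw [List.countP_eq_zero, List.drop_eq_getElem_cons hi]
      simp only [List.mem_cons, decide_eq_true_eq, forall_eq_or_imp]
      exact ⟨hpi, fun a ha hpa => hpi (hp (hsorted.1 a ha) hpa)⟩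
    have htake := (l.take i).countP_le_length (p := fun a => p a)
    rw [← l.take_append_drop i, List.countP_append, hdrop] at hcount
    rw [List.length_take] at htake
    omega
  · intro hpi
    have htake : (l.take (i + 1)).countP (fun a => p a) = i + 1 := by
      have hsorted := hl.sublist (l.take_sublist (i + 1))
      rw [List.take_add_one, List.getElem?_eq_getElem hi, Option.toList_some,
        List.pairwise_append] at hsorted
      rw [List.countP_eq_length.2, List.length_take_of_le hi]
      rw [List.take_add_one, List.getElem?_eq_getElem hi, Option.toList_some]
      simp only [List.mem_append, List.mem_singleton, decide_eq_true_eq]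
      rintro a (ha | rfl)
      · exact hp (hsorted.2.2 a ha _ (List.mem_singleton_self _)) hpi
      · exact hpi
    have := (l.take_sublist (i + 1)).countP_le (p := fun a => p a)
    omega

-- The `j`-th smallest entry of `x`, counting from `0`; it is `0` when `j ≥ n`.
noncomputable def orderStat {n : ℕ} (x : Fin n → ℝ) (j : ℕ) : ℝ :=
  ((List.ofFn x).mergeSort (· ≤ ·)).getD j 0

theorem sampleMedian_eq_orderStat {n : ℕ} (x : Fin n → ℝ) :
    sampleMedian x = if n % 2 = 1 then orderStat x (n / 2)
      else (orderStat x (n / 2 - 1) + orderStat x (n / 2)) / 2 := rfl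

theorem orderStat_iff_lt_card {n : ℕ} (x : Fin n → ℝ) {p : ℝ → Prop} [DecidablePred p]
    (hp : ∀ ⦃a b⦄, a ≤ b → p b → p a) {j : ℕ} (hj : j < n) :
    p (orderStat x j) ↔ j < #{i | p (x i)} := by
  have hperm := List.mergeSort_perm (List.ofFn x) (fun a b => decide (a ≤ b))
  have hj' : j < ((List.ofFn x).mergeSort (· ≤ ·)).length := by
    rwa [hperm.length_eq, List.length_ofFn]
  rw [orderStat, List.getD_eq_getElem _ _ hj',
    ← (List.pairwise_mergeSort' _ _).lt_countP_iff hp hj', hperm.countP_eq, List.countP_ofFn]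

theorem orderStat_le_iff {n : ℕ} (x : Fin n → ℝ) (t : ℝ) {j : ℕ} (hj : j < n) :
    orderStat x j ≤ t ↔ j < #{i | x i ≤ t} :=
  orderStat_iff_lt_card x (fun _ _ hab hbt => hab.trans hbt) hj

theorem le_orderStat {n : ℕ} {x : Fin n → ℝ} {t : ℝ} {j : ℕ} (hj : j < n)
    (h : n ≤ j + #{i | t ≤ x i}) : t ≤ orderStat x j := by
  have hsplit := card_filter_add_card_filter_not (s := univ) (fun i => x i < t)
  simp only [not_lt, card_univ, Fintype.card_fin] at hsplit
  by_contra hlt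
  have := (orderStat_iff_lt_card x (fun _ _ hab hbt => hab.trans_lt hbt) hj).1 (not_le.1 hlt)
  omega

theorem sampleMedian_le {n : ℕ} {x : Fin n → ℝ} {t : ℝ} (h : n < 2 * #{i | x i ≤ t}) :
    sampleMedian x ≤ t := by
  have hcard : #{i | x i ≤ t} ≤ n := by simpa using card_filter_le univ fun i => x i ≤ t
  rw [sampleMedian_eq_orderStat]
  split_ifs
  · exact (orderStat_le_iff x t (by omega)).2 (by omega)
  · have h₁ := (orderStat_le_iff x t (j := n / 2 - 1) (by omega)).2 (by omega)
    have h₂ := (orderStat_le_iff x t (j := n / 2) (by omega)).2 (by omega)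
    linarith

theorem le_sampleMedian {n : ℕ} {x : Fin n → ℝ} {t : ℝ} (h : n < 2 * #{i | t ≤ x i}) :
    t ≤ sampleMedian x := by
  have hcard : #{i | t ≤ x i} ≤ n := by simpa using card_filter_le univ fun i => t ≤ x i
  rw [sampleMedian_eq_orderStat]
  split_ifs
  · exact le_orderStat (by omega) (by omega)
  · have h₁ := le_orderStat (x := x) (t := t) (j := n / 2 - 1) (by omega) (by omega)
    have h₂ := le_orderStat (x := x) (t := t) (j := n / 2) (by omega) (by omega)
    linarith

theorem measurable_card_filter_le {n : ℕ} (t : ℝ) :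
    Measurable fun x : Fin n → ℝ => #{i | x i ≤ t} := by
  simp_rw [card_filter]
  exact Finset.measurable_sum _ fun i _ =>
    Measurable.ite (measurableSet_le (measurable_pi_apply i) measurable_const)
      measurable_const measurable_const

theorem measurable_orderStat {n : ℕ} (j : ℕ) : Measurable fun x : Fin n → ℝ => orderStat x j := by
  by_cases hj : j < n
  · refine measurable_of_Iic fun t => ?_
    have hpre : (fun x : Fin n → ℝ => orderStat x j) ⁻¹' Iic t = {x | j < #{i | x i ≤ t}} := by
      ext x
      exact orderStat_le_iff x t hj
    rw [hpre]
    exact measurableSet_lt measurable_const (measurable_card_filter_le t)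
  · have hzero : (fun x : Fin n → ℝ => orderStat x j) = fun _ => 0 := by
      funext x
      apply List.getD_eq_default
      rw [(List.mergeSort_perm _ _).length_eq, List.length_ofFn]
      omega
    rw [hzero]
    exact measurable_const

theorem measurable_sampleMedian {n : ℕ} : Measurable fun x : Fin n → ℝ => sampleMedian x := by
  simp_rw [sampleMedian_eq_orderStat]
  split_ifs
  · exact measurable_orderStat _
  · exact ((measurable_orderStat _).add (measurable_orderStat _)).div_const 2

theorem measurable_sampleMAD {n : ℕ} : Measurable fun x : Fin n → ℝ => sampleMAD x :=
  measurable_sampleMedian.comp <| measurable_pi_lambda _ fun i =>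
    ((measurable_pi_apply i).sub measurable_sampleMedian).abs

theorem sampleMAD_le {n : ℕ} {x : Fin n → ℝ} {m a b : ℝ} (hmed : |sampleMedian x - m| ≤ a)
    (h : n < 2 * #{i | |x i - m| ≤ b}) : sampleMAD x ≤ b + a := by
  refine sampleMedian_le (h.trans_le (Nat.mul_le_mul_left 2 (card_le_card ?_)))
  refine monotone_filter_right _ fun i _ hi => ?_
  calc |x i - sampleMedian x| ≤ |x i - m| + |m - sampleMedian x| := abs_sub_le _ _ _
    _ ≤ b + a := add_le_add hi (abs_sub_comm m _ ▸ hmed)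

theorem le_sampleMAD {n : ℕ} {x : Fin n → ℝ} {m a b : ℝ} (hmed : |sampleMedian x - m| ≤ a)
    (h : n < 2 * #{i | b ≤ |x i - m|}) : b - a ≤ sampleMAD x := by
  refine le_sampleMedian (h.trans_le (Nat.mul_le_mul_left 2 (card_le_card ?_)))
  refine monotone_filter_right _ fun i _ hi => ?_
  linarith [abs_sub_le (x i) (sampleMedian x) m]

section Frequency

variable {Ω α : Type*} [MeasurableSpace Ω] [MeasurableSpace α] {P : Measure Ω}
  [IsFiniteMeasure P] {μ : Measure α} {Z : ℕ → Ω → α}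

theorem ae_tendsto_frequency (hZ : ∀ i, Measurable (Z i))
    (hindep : Pairwise fun i j => Z i ⟂ᵢ[P] Z j) (hlaw : ∀ i, P.map (Z i) = μ)
    {p : α → Prop} [DecidablePred p] (hp : MeasurableSet {a | p a}) :
    ∀ᵐ ω ∂P, Tendsto (fun n : ℕ => (#{i : Fin n | p (Z i ω)} : ℝ) / n) atTop
      (𝓝 (μ.real {a | p a})) := by
  set f : α → ℝ := {a | p a}.indicator 1
  have hf : Measurable f := measurable_one.indicator hp
  have hint : Integrable (f ∘ Z 0) P :=
    .of_bound (hf.comp (hZ 0)).aestronglyMeasurable 1 (ae_of_all _ fun ω => by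
      simp only [Function.comp_apply, f, indicator_apply]
      split_ifs <;> simp)
  have hident (i : ℕ) : IdentDistrib (f ∘ Z i) (f ∘ Z 0) P P :=
    IdentDistrib.comp ⟨(hZ i).aemeasurable, (hZ 0).aemeasurable, by rw [hlaw, hlaw]⟩ hf
  have hmean : P[f ∘ Z 0] = μ.real {a | p a} := by
    rw [← hlaw 0, ← integral_indicator_one hp]
    exact (integral_map (hZ 0).aemeasurable hf.aestronglyMeasurable).symm
  have hcount (ω : Ω) (n : ℕ) : ∑ i ∈ range n, (f ∘ Z i) ω = #{i : Fin n | p (Z i ω)} := by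
    rw [← Fin.sum_univ_eq_sum_range (fun i => (f ∘ Z i) ω)]
    simp [f, indicator_apply, sum_boole]
  simpa only [hcount, hmean] using strong_law_ae_real (fun i => f ∘ Z i) hint
    (fun i j hij => (hindep hij).comp hf hf) hident

theorem ae_eventually_lt_two_mul_card (hZ : ∀ i, Measurable (Z i))
    (hindep : Pairwise fun i j => Z i ⟂ᵢ[P] Z j) (hlaw : ∀ i, P.map (Z i) = μ)
    {p : α → Prop} [DecidablePred p] (hp : MeasurableSet {a | p a})
    (hhalf : 1 / 2 < μ.real {a | p a}) :
    ∀ᵐ ω ∂P, ∀ᶠ n : ℕ in atTop, n < 2 * #{i : Fin n | p (Z i ω)} := by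
  filter_upwards [ae_tendsto_frequency hZ hindep hlaw hp] with ω hω
  filter_upwards [hω.eventually (eventually_gt_nhds hhalf), eventually_gt_atTop 0] with n hn hn0
  rw [lt_div_iff₀ (by exact_mod_cast hn0)] at hn
  exact_mod_cast (by linarith : (n : ℝ) < 2 * #{i : Fin n | p (Z i ω)})

end Frequency

section Convergence

variable {Ω : Type*} [MeasurableSpace Ω] {P : Measure Ω}

theorem ae_tendsto_of_forall_ae_eventually_abs_sub_le {f : ℕ → Ω → ℝ} {c : ℝ}
    (h : ∀ δ > 0, ∀ᵐ ω ∂P, ∀ᶠ n in atTop, |f n ω - c| ≤ δ) :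
    ∀ᵐ ω ∂P, Tendsto (fun n => f n ω) atTop (𝓝 c) := by
  filter_upwards [ae_all_iff.2 fun k : ℕ => h (1 / (k + 1)) Nat.one_div_pos_of_nat] with ω hω
  refine Metric.tendsto_nhds.2 fun e he => ?_
  obtain ⟨k, hk⟩ := exists_nat_one_div_lt he
  exact (hω k).mono fun n hn => (Real.dist_eq _ _ ▸ hn).trans_lt hk

theorem tendsto_measure_lt_abs_sub_of_ae_tendsto [IsFiniteMeasure P] {f : ℕ → Ω → ℝ} {c : ℝ}
    (hf : ∀ n, Measurable (f n)) (h : ∀ᵐ ω ∂P, Tendsto (fun n => f n ω) atTop (𝓝 c))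
    {ε : ℝ} (hε : 0 < ε) : Tendsto (fun n => P {ω | ε < |f n ω - c|}) atTop (𝓝 0) := by
  have hmeas := tendstoInMeasure_iff_dist.1
    (tendstoInMeasure_of_tendsto_ae (fun n => (hf n).aestronglyMeasurable) h) ε hε
  refine tendsto_of_tendsto_of_tendsto_of_le_of_le tendsto_const_nhds hmeas (fun _ => zero_le)
    fun n => measure_mono fun ω (hω : ε < |f n ω - c|) =>
      show ε ≤ dist (f n ω) c by rw [Real.dist_eq]; exact hω.le

end Convergence

-- For a probability measure `μ`, this says that `m` is the only median of `μ`.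
def IsStrictMedian (μ : Measure ℝ) (m : ℝ) : Prop :=
  ∀ δ > 0, 1 / 2 < μ.real (Iic (m + δ)) ∧ 1 / 2 < μ.real (Ici (m - δ))

section Consistency

variable {Ω : Type*} [MeasurableSpace Ω] {P : Measure Ω} [IsFiniteMeasure P]
  {μ : Measure ℝ} {Z : ℕ → Ω → ℝ}

theorem IsStrictMedian.ae_eventually_abs_sampleMedian_sub_le {m : ℝ} (hm : IsStrictMedian μ m)
    (hZ : ∀ i, Measurable (Z i)) (hindep : Pairwise fun i j => Z i ⟂ᵢ[P] Z j)
    (hlaw : ∀ i, P.map (Z i) = μ) {δ : ℝ} (hδ : 0 < δ) :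
    ∀ᵐ ω ∂P, ∀ᶠ n : ℕ in atTop, |sampleMedian (fun i : Fin n => Z i ω) - m| ≤ δ := by
  filter_upwards [ae_eventually_lt_two_mul_card hZ hindep hlaw measurableSet_Iic (hm δ hδ).1,
    ae_eventually_lt_two_mul_card hZ hindep hlaw measurableSet_Ici (hm δ hδ).2] with ω hle hge
  filter_upwards [hle, hge] with n hle hge
  have := sampleMedian_le hle
  have := le_sampleMedian hge
  exact abs_sub_le_iff.2 ⟨by linarith, by linarith⟩

theorem IsStrictMedian.ae_eventually_abs_sampleMAD_sub_le {m q : ℝ} (hm : IsStrictMedian μ m)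
    (hq : IsStrictMedian (μ.map fun x => |x - m|) q)
    (hZ : ∀ i, Measurable (Z i)) (hindep : Pairwise fun i j => Z i ⟂ᵢ[P] Z j)
    (hlaw : ∀ i, P.map (Z i) = μ) {δ : ℝ} (hδ : 0 < δ) :
    ∀ᵐ ω ∂P, ∀ᶠ n : ℕ in atTop, |sampleMAD (fun i : Fin n => Z i ω) - q| ≤ δ := by
  have hg : Measurable fun x : ℝ => |x - m| := by fun_prop
  have hW (i : ℕ) : Measurable fun ω => |Z i ω - m| := hg.comp (hZ i)
  have hWindep : Pairwise fun i j => (fun ω => |Z i ω - m|) ⟂ᵢ[P] fun ω => |Z j ω - m| :=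
    fun i j hij => (hindep hij).comp hg hg
  have hWlaw (i : ℕ) : P.map (fun ω => |Z i ω - m|) = μ.map fun x => |x - m| := by
    rw [← hlaw i, Measure.map_map hg (hZ i)]
    rfl
  have hδ2 : 0 < δ / 2 := half_pos hδ
  filter_upwards [hm.ae_eventually_abs_sampleMedian_sub_le hZ hindep hlaw hδ2,
    ae_eventually_lt_two_mul_card hW hWindep hWlaw measurableSet_Iic (hq _ hδ2).1,
    ae_eventually_lt_two_mul_card hW hWindep hWlaw measurableSet_Ici (hq _ hδ2).2]
    with ω hmed hle hge
  filter_upwards [hmed, hle, hge] with n hmed hle hge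
  have := sampleMAD_le hmed hle
  have := le_sampleMAD hmed hge
  exact abs_sub_le_iff.2 ⟨by linarith, by linarith⟩

theorem IsStrictMedian.ae_tendsto_sampleMAD {m q : ℝ} (hm : IsStrictMedian μ m)
    (hq : IsStrictMedian (μ.map fun x => |x - m|) q)
    (hZ : ∀ i, Measurable (Z i)) (hindep : Pairwise fun i j => Z i ⟂ᵢ[P] Z j)
    (hlaw : ∀ i, P.map (Z i) = μ) :
    ∀ᵐ ω ∂P, Tendsto (fun n : ℕ => sampleMAD (fun i : Fin n => Z i ω)) atTop (𝓝 q) :=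
  ae_tendsto_of_forall_ae_eventually_abs_sub_le fun _ hδ =>
    hm.ae_eventually_abs_sampleMAD_sub_le hq hZ hindep hlaw hδ

end Consistency

noncomputable def quantile (μ : Measure ℝ) (p : ℝ) : ℝ :=
  sInf {x | p ≤ cdf μ x}

section CDF

variable {μ : Measure ℝ}

theorem cdf_lt_of_lt_quantile {p x : ℝ} (hp : 0 < p) (hx : x < quantile μ p) : cdf μ x < p := by
  obtain ⟨b, hb⟩ := eventually_atBot.1 ((tendsto_cdf_atBot μ).eventually (eventually_lt_nhds hp))
  have hbdd : BddBelow {y | p ≤ cdf μ y} :=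
    ⟨b, fun y hy => le_of_not_gt fun hyb => (hb y hyb.le).not_ge hy⟩
  by_contra! hpx
  exact (csInf_le hbdd hpx).not_gt hx

theorem le_cdf_quantile {p : ℝ} (hp : p < 1) : p ≤ cdf μ (quantile μ p) := by
  obtain ⟨b, hb⟩ := eventually_atTop.1 ((tendsto_cdf_atTop μ).eventually (eventually_gt_nhds hp))
  have hne : {y | p ≤ cdf μ y}.Nonempty := ⟨b, (hb b le_rfl).le⟩
  have hright : ∀ x > quantile μ p, p ≤ cdf μ x := fun x hx => by
    obtain ⟨y, hy, hyx⟩ := exists_lt_of_csInf_lt hne hx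
    exact hy.trans (monotone_cdf μ hyx.le)
  exact ge_of_tendsto (((cdf μ).right_continuous _).mono Ioi_subset_Ici_self)
    (eventually_nhdsWithin_of_forall hright)

variable [IsProbabilityMeasure μ]

theorem measure_Ioc_eq_ofReal_cdf_sub (a b : ℝ) :
    μ (Ioc a b) = ENNReal.ofReal (cdf μ b - cdf μ a) := by
  rw [← (cdf μ).measure_Ioc, measure_cdf]

theorem isStrictMedian_of_cdf {m : ℝ}
    (h : ∀ δ > 0, cdf μ (m - δ) < 1 / 2 ∧ 1 / 2 < cdf μ (m + δ)) : IsStrictMedian μ m := by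
  intro δ hδ
  obtain ⟨hlo, hhi⟩ := h δ hδ
  refine ⟨cdf_eq_real μ _ ▸ hhi, ?_⟩
  have hIoi : μ.real (Ioi (m - δ)) ≤ μ.real (Ici (m - δ)) := measureReal_mono Ioi_subset_Ici_self
  rw [← compl_Iic, probReal_compl_eq_one_sub measurableSet_Iic, ← cdf_eq_real] at hIoi
  linarith

section Symmetric

variable [NullSingletonClass μ]

theorem cdf_neg_of_map_neg_eq (hsymm : μ.map (fun x => -x) = μ) (x : ℝ) :
    cdf μ (-x) = 1 - cdf μ x := by
  have hpre : (fun x : ℝ => -x) ⁻¹' Iic (-x) = Ici x := by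
    ext y
    simp
  rw [cdf_eq_real, cdf_eq_real]
  conv_lhs => rw [← hsymm]
  rw [map_measureReal_apply measurable_neg measurableSet_Iic, hpre,
    ← measureReal_congr Ioi_ae_eq_Ici, ← compl_Iic, probReal_compl_eq_one_sub measurableSet_Iic]

theorem cdf_zero_of_map_neg_eq (hsymm : μ.map (fun x => -x) = μ) : cdf μ 0 = 1 / 2 := by
  have := cdf_neg_of_map_neg_eq hsymm 0
  rw [neg_zero] at this
  linarith

theorem cdf_map_abs_of_map_neg_eq (hsymm : μ.map (fun x => -x) = μ)
    [IsProbabilityMeasure (μ.map abs)] {c : ℝ} (hc : 0 ≤ c) :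
    cdf (μ.map abs) c = 2 * cdf μ c - 1 := by
  have hpre : abs ⁻¹' Iic c = Icc (-c) c := by
    ext y
    simp [abs_le]
  rw [cdf_eq_real, map_measureReal_apply measurable_abs measurableSet_Iic, hpre,
    ← measureReal_congr Ioc_ae_eq_Icc, measureReal_def, measure_Ioc_eq_ofReal_cdf_sub,
    ENNReal.toReal_ofReal (sub_nonneg.2 (monotone_cdf μ (by linarith))),
    cdf_neg_of_map_neg_eq hsymm]
  ring

theorem isStrictMedian_zero_of_map_neg_eq (hsymm : μ.map (fun x => -x) = μ)
    (hmono : StrictMono (cdf μ)) : IsStrictMedian μ 0 :=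
  isStrictMedian_of_cdf fun δ hδ => by
    rw [zero_sub, zero_add, ← cdf_zero_of_map_neg_eq hsymm]
    exact ⟨hmono (neg_lt_zero.2 hδ), hmono hδ⟩

theorem quantile_three_quarters_pos (hsymm : μ.map (fun x => -x) = μ) :
    0 < quantile μ (3 / 4) := by
  by_contra! hq
  have h34 := le_cdf_quantile (μ := μ) (p := 3 / 4) (by norm_num)
  have := monotone_cdf μ hq
  rw [cdf_zero_of_map_neg_eq hsymm] at this
  linarith

theorem isStrictMedian_map_abs_quantile (hsymm : μ.map (fun x => -x) = μ)
    (hmono : StrictMono (cdf μ)) :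
    IsStrictMedian (μ.map abs) (quantile μ (3 / 4)) := by
  have := Measure.isProbabilityMeasure_map (μ := μ) measurable_abs.aemeasurable
  set q := quantile μ (3 / 4)
  have hq := quantile_three_quarters_pos hsymm
  have hq34 := le_cdf_quantile (μ := μ) (p := 3 / 4) (by norm_num)
  refine isStrictMedian_of_cdf fun δ hδ => ⟨?_, ?_⟩
  · have hlt : cdf μ (max (q - δ) 0) < 3 / 4 :=
      cdf_lt_of_lt_quantile (by norm_num) (max_lt (by linarith) hq)
    calc cdf (μ.map abs) (q - δ) ≤ cdf (μ.map abs) (max (q - δ) 0) :=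
          monotone_cdf _ (le_max_left _ _)
      _ = 2 * cdf μ (max (q - δ) 0) - 1 := cdf_map_abs_of_map_neg_eq hsymm (le_max_right _ _)
      _ < 1 / 2 := by linarith
  · rw [cdf_map_abs_of_map_neg_eq hsymm (by linarith)]
    linarith [hmono (lt_add_of_pos_right q hδ)]

end Symmetric

end CDF

theorem gaussianReal_map_neg_eq_self (v : ℝ≥0) :
    (gaussianReal 0 v).map (fun x => -x) = gaussianReal 0 v := by
  simpa using gaussianReal_map_neg (μ := 0) (v := v)

theorem strictMono_cdf_gaussianReal (m : ℝ) {v : ℝ≥0} (hv : v ≠ 0) :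
    StrictMono (cdf (gaussianReal m v)) := by
  intro a b hab
  by_contra! hba
  have hIoc : gaussianReal m v (Ioc a b) = 0 := by
    rw [measure_Ioc_eq_ofReal_cdf_sub, ENNReal.ofReal_eq_zero]
    linarith
  have := gaussianReal_absolutelyContinuous' m hv hIoc
  rw [Real.volume_Ioc, ENNReal.ofReal_eq_zero] at this
  linarith

theorem stdGaussianQuantile_eq_quantile (p : ℝ) :
    stdGaussianQuantile p = quantile (gaussianReal 0 1) p := rfl

/-- For i.i.d. standard normal `Z₁, Z₂, …`, the rescaled median absolute
deviation `MAD₁≤i≤n Zᵢ / Φ⁻¹(3/4)` converges in probability to `1`. -/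
theorem rescaled_mad_weakly_consistent
    {Ω : Type*} [MeasurableSpace Ω] (P : Measure Ω) [IsProbabilityMeasure P]
    (Z : ℕ → Ω → ℝ) (hZmeas : ∀ i, Measurable (Z i))
    (hZindep : iIndepFun Z P)
    (hZlaw : ∀ i, P.map (Z i) = gaussianReal 0 1) :
    ∀ ε : ℝ, 0 < ε →
      Tendsto
        (fun n : ℕ =>
          P {ω | ε < |sampleMAD (fun i : Fin n => Z i ω) /
              stdGaussianQuantile (3 / 4) - 1|})
        atTop (nhds 0) := by
  intro ε hε
  have := nullSingletonClass_gaussianReal (μ := 0) (v := 1) one_ne_zero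
  have hsymm := gaussianReal_map_neg_eq_self 1
  have hmono := strictMono_cdf_gaussianReal 0 one_ne_zero
  rw [stdGaussianQuantile_eq_quantile]
  have hq := quantile_three_quarters_pos hsymm
  have hmad := (isStrictMedian_zero_of_map_neg_eq hsymm hmono).ae_tendsto_sampleMAD
    (by simpa using isStrictMedian_map_abs_quantile hsymm hmono) hZmeas
    (fun i j hij => hZindep.indepFun hij) hZlaw
  refine tendsto_measure_lt_abs_sub_of_ae_tendsto (fun n => (measurable_sampleMAD.comp
    (measurable_pi_lambda _ fun i => hZmeas i)).div_const _) ?_ hε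
  filter_upwards [hmad] with ω hω
  simpa [hq.ne'] using hω.div_const (quantile (gaussianReal 0 1) (3 / 4))
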